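/- Discrete-time Pontryagin necessary conditions (costate backward recursion): for the optimal control problem min Σ_{k=0}^{m−1} L(x_k,u_k) + φ(x_m) subject to x_{k+1} = f(x_k,u_k), if (x*, u*) is optimal with f, L, φ differentiable, then there exist costates λ_0,...,λ_m with λ_m = ∂φ/∂x(x_m), λ_k = (∂f/∂x(x_k,u_k))ᵀ λ_{k+1} + ∂L/∂x(x_k,u_k), and (∂f/∂u(x_k,u_k))ᵀ λ_{k+1} + ∂L/∂u(x_k,u_k) = 0 for k = 0,...,m−1. -/

import Mathlib

open Matrix

/-- Trajectory of a discrete-time control system. -/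
def traj {X U : Type*} (f : X → U → X) (x0 : X) (u : ℕ → U) : ℕ → X
  | 0 => x0
  | k + 1 => f (traj f x0 u k) (u k)

/-!
The costate is the derivative of the cost-to-go: `λ_k` is the gradient at `x_k` of the cost
`V_{m-k}` of the remaining `m - k` steps under the optimal controls, as a function of the state.
The backward recursion is then the chain rule applied to the one-step Bellman decomposition
`V_{s+1}(x) = L(x, u) + V_s(f(x, u))`. For stationarity, changing only the `k`-th control changes
the total cost by `a ↦ L(x_k, a) + V_{m-k-1}(f(x_k, a))` plus a constant, so this function is
minimal at `u_k` and its derivative there, again computed by the chain rule, vanishes.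
-/

open Finset Function

section CostToGo

variable {X U : Type*} (f : X → U → X) (L : X → U → ℝ) (φ : X → ℝ)

def costToGo : ℕ → (ℕ → U) → X → ℝ
  | 0, _, x => φ x
  | s + 1, c, x => L x (c 0) + costToGo s (fun j => c (j + 1)) (f x (c 0))

theorem costToGo_succ_shift (s k : ℕ) (c : ℕ → U) :
    costToGo f L φ (s + 1) (fun j => c (k + j)) =
      fun x => L x (c k) + costToGo f L φ s (fun j => c (k + 1 + j)) (f x (c k)) := by
  funext x
  simp only [costToGo, add_zero, add_assoc, add_comm 1]

theorem costToGo_split (s : ℕ) (c : ℕ → U) (x : X) :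
    ∀ k ≤ s, costToGo f L φ s c x =
      ∑ j ∈ range k, L (traj f x c j) (c j) +
        costToGo f L φ (s - k) (fun j => c (k + j)) (traj f x c k)
  | 0, _ => by simp [traj]
  | k + 1, hk => by
    rw [costToGo_split s c x k (by omega), show s - k = s - (k + 1) + 1 by omega,
      costToGo_succ_shift, sum_range_succ, add_assoc]
    rfl

theorem costToGo_eq_sum (s : ℕ) (c : ℕ → U) (x : X) :
    costToGo f L φ s c x = φ (traj f x c s) + ∑ j ∈ range s, L (traj f x c j) (c j) := by
  rw [costToGo_split f L φ s c x s le_rfl, Nat.sub_self, add_comm]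
  rfl

theorem traj_update_of_le {x : X} {c : ℕ → U} {k j : ℕ} (a : U) (hj : j ≤ k) :
    traj f x (update c k a) j = traj f x c j := by
  induction j with
  | zero => rfl
  | succ j ih =>
    simp only [traj, ih (by omega), update_of_ne (show j ≠ k by omega)]

theorem costToGo_update {s k : ℕ} (hk : k < s) (c : ℕ → U) (x : X) (a : U) :
    costToGo f L φ s (update c k a) x =
      ∑ j ∈ range k, L (traj f x c j) (c j) +
        (L (traj f x c k) a +
          costToGo f L φ (s - (k + 1)) (fun j => c (k + 1 + j)) (f (traj f x c k) a)) := by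
  rw [costToGo_split f L φ s _ x k hk.le, show s - k = s - (k + 1) + 1 by omega,
    costToGo_succ_shift, update_self, traj_update_of_le f a le_rfl]
  congr 1
  · refine sum_congr rfl fun j hj => ?_
    rw [mem_range] at hj
    rw [traj_update_of_le f a hj.le, update_of_ne hj.ne]
  · dsimp only
    congr 3
    funext j
    exact update_of_ne (by omega) _ _

end CostToGo

section Costate

variable {X U : Type*} [NormedAddCommGroup X] [NormedSpace ℝ X] {f : X → U → X}
  {L : X → U → ℝ} {φ : X → ℝ}

variable (f L φ) in
noncomputable def costate (m : ℕ) (u : ℕ → U) (x0 : X) (k : ℕ) : X →L[ℝ] ℝ :=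
  fderiv ℝ (costToGo f L φ (m - k) fun j => u (k + j)) (traj f x0 u k)

theorem costate_self (m : ℕ) (u : ℕ → U) (x0 : X) :
    costate f L φ m u x0 m = fderiv ℝ φ (traj f x0 u m) := by
  rw [costate, Nat.sub_self]
  rfl

variable [NormedAddCommGroup U] [NormedSpace ℝ U]

theorem Differentiable.apply_left {Y : Type*} [NormedAddCommGroup Y] [NormedSpace ℝ Y]
    {g : X → U → Y} (hg : Differentiable ℝ fun q : X × U => g q.1 q.2) (a : U) :
    Differentiable ℝ fun x => g x a :=
  hg.comp (differentiable_id.prodMk (differentiable_const a))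

theorem Differentiable.apply_right {Y : Type*} [NormedAddCommGroup Y] [NormedSpace ℝ Y]
    {g : X → U → Y} (hg : Differentiable ℝ fun q : X × U => g q.1 q.2) (x : X) :
    Differentiable ℝ fun a => g x a :=
  hg.comp ((differentiable_const x).prodMk differentiable_id)

theorem fderiv_add_comp {E F : Type*} [NormedAddCommGroup E] [NormedSpace ℝ E]
    [NormedAddCommGroup F] [NormedSpace ℝ F] {ℓ : E → ℝ} {g : E → F} {V : F → ℝ} {z : E}
    (hℓ : DifferentiableAt ℝ ℓ z) (hg : DifferentiableAt ℝ g z)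
    (hV : DifferentiableAt ℝ V (g z)) :
    fderiv ℝ (fun y => ℓ y + V (g y)) z = fderiv ℝ ℓ z + (fderiv ℝ V (g z)).comp (fderiv ℝ g z) :=
  (hℓ.hasFDerivAt.add (hV.hasFDerivAt.comp z hg.hasFDerivAt)).fderiv

variable (hf : Differentiable ℝ fun q : X × U => f q.1 q.2)
  (hL : Differentiable ℝ fun q : X × U => L q.1 q.2) (hφ : Differentiable ℝ φ)
include hf hL hφ

theorem differentiable_costToGo : ∀ (s : ℕ) (c : ℕ → U), Differentiable ℝ (costToGo f L φ s c)
  | 0, _ => hφ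
  | s + 1, c =>
    (hL.apply_left (c 0)).add
      ((differentiable_costToGo s fun j => c (j + 1)).comp (hf.apply_left (c 0)))

theorem costate_of_lt {m k : ℕ} (hk : k < m) (u : ℕ → U) (x0 : X) :
    costate f L φ m u x0 k =
      fderiv ℝ (fun x => L x (u k)) (traj f x0 u k) +
        (costate f L φ m u x0 (k + 1)).comp (fderiv ℝ (fun x => f x (u k)) (traj f x0 u k)) := by
  rw [costate, show m - k = m - (k + 1) + 1 by omega, costToGo_succ_shift]
  exact fderiv_add_comp (hL.apply_left _ _) (hf.apply_left _ _)
    (differentiable_costToGo hf hL hφ _ _ _)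

theorem costate_stationarity_of_forall_le {m k : ℕ} (hk : k < m) {u : ℕ → U} {x0 : X}
    (hopt : ∀ v, costToGo f L φ m u x0 ≤ costToGo f L φ m v x0) :
    fderiv ℝ (fun a => L (traj f x0 u k) a) (u k) +
      (costate f L φ m u x0 (k + 1)).comp (fderiv ℝ (fun a => f (traj f x0 u k) a) (u k)) = 0 := by
  set stage : U → ℝ := fun a => L (traj f x0 u k) a +
    costToGo f L φ (m - (k + 1)) (fun j => u (k + 1 + j)) (f (traj f x0 u k) a)
  have hmin : IsLocalMin stage (u k) := .of_forall fun a => by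
    have h : costToGo f L φ m (update u k (u k)) x0 ≤ costToGo f L φ m (update u k a) x0 := by
      rw [update_eq_self]
      exact hopt _
    rwa [costToGo_update f L φ hk, costToGo_update f L φ hk, add_le_add_iff_left] at h
  rw [← hmin.fderiv_eq_zero]
  exact (fderiv_add_comp (hL.apply_right _ _) (hf.apply_right _ _)
    (differentiable_costToGo hf hL hφ _ _ _)).symm

end Costate

theorem dotProduct_apply_single {ι : Type*} [Fintype ι] [DecidableEq ι] (Λ : (ι → ℝ) →L[ℝ] ℝ)
    (w : ι → ℝ) : (fun i => Λ (Pi.single i 1)) ⬝ᵥ w = Λ w := by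
  conv_rhs => rw [← univ_sum_single w]
  simp only [map_sum, dotProduct]
  refine sum_congr rfl fun i _ => ?_
  rw [mul_comm, ← smul_eq_mul, ← map_smul, ← Pi.single_smul', smul_eq_mul, mul_one]

theorem discrete_pontryagin (n p m : ℕ)
    (f : (Fin n → ℝ) → (Fin p → ℝ) → (Fin n → ℝ))
    (L : (Fin n → ℝ) → (Fin p → ℝ) → ℝ) (φ : (Fin n → ℝ) → ℝ)
    (hf : ContDiff ℝ 1 (fun q : (Fin n → ℝ) × (Fin p → ℝ) => f q.1 q.2))
    (hL : ContDiff ℝ 1 (fun q : (Fin n → ℝ) × (Fin p → ℝ) => L q.1 q.2))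
    (hφ : ContDiff ℝ 1 φ)
    (x0 : Fin n → ℝ) (u : ℕ → (Fin p → ℝ))
    (J : (ℕ → (Fin p → ℝ)) → ℝ)
    (hJ : J = fun v => φ (traj f x0 v m) +
      ∑ k ∈ Finset.range m, L (traj f x0 v k) (v k))
    (hopt : ∀ v : ℕ → (Fin p → ℝ), J u ≤ J v) :
    ∃ lam : ℕ → (Fin n → ℝ),
      (∀ w : Fin n → ℝ, lam m ⬝ᵥ w = fderiv ℝ φ (traj f x0 u m) w) ∧
      (∀ k < m, ∀ w : Fin n → ℝ,
        lam k ⬝ᵥ w =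
          lam (k+1) ⬝ᵥ fderiv ℝ (fun x => f x (u k)) (traj f x0 u k) w +
            fderiv ℝ (fun x => L x (u k)) (traj f x0 u k) w) ∧
      (∀ k < m, ∀ w : Fin p → ℝ,
        lam (k+1) ⬝ᵥ fderiv ℝ (fun v => f (traj f x0 u k) v) (u k) w +
          fderiv ℝ (fun v => L (traj f x0 u k) v) (u k) w = 0) := by
  have hf' := hf.differentiable one_ne_zero
  have hL' := hL.differentiable one_ne_zero
  have hφ' := hφ.differentiable one_ne_zero
  have hmin : ∀ v, costToGo f L φ m u x0 ≤ costToGo f L φ m v x0 := by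
    simpa only [hJ, costToGo_eq_sum] using hopt
  refine ⟨fun k i => costate f L φ m u x0 k (Pi.single i 1), fun w => ?_, fun k hk w => ?_,
    fun k hk w => ?_⟩
  · rw [dotProduct_apply_single, costate_self]
  · rw [dotProduct_apply_single, dotProduct_apply_single, costate_of_lt hf' hL' hφ' hk, add_comm]
    rfl
  · rw [dotProduct_apply_single, add_comm]
    exact congrArg (· w) (costate_stationarity_of_forall_le hf' hL' hφ' hk hmin)
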